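/- arXiv:2306.03658 — 4 statements merged into one kernel-verified Lean document; each statement's English description precedes it below -/
import Mathlib

section
/- Let Ω ⊂ ℝⁿ, n ≥ 2, be a regular domain, F ∈ C²(ℝ) with F ≤ 0 and f = F', and let u ∈ C³(Ω) ∩ C¹(Ω̄) be a bounded nonconstant solution of Δu + f(u) = 0 and u > 0 in Ω, u = 0 on ∂Ω, ‖∇u‖ = κ on ∂Ω (κ ≥ 0 constant). Set P(x) = ‖∇u(x)‖² + 2F(u(x)) and α = max{0, κ² + 2F(0)}, and assume P(x) ≤ α for all x ∈ Ω. If x₀ ∈ Ω satisfies P(x₀) = α, then ∇u(x₀) ≠ 0. -/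
open scoped RealInnerProductSpace
open Metric Set Filter

/-- The Laplacian of a real-valued function on `EuclideanSpace ℝ (Fin n)`,
defined as the sum of the pure second partial derivatives in the coordinate
directions. -/
noncomputable def laplacian {n : ℕ} (u : EuclideanSpace ℝ (Fin n) → ℝ)
    (x : EuclideanSpace ℝ (Fin n)) : ℝ :=
  ∑ i : Fin n, fderiv ℝ (fun y => fderiv ℝ u y (EuclideanSpace.single i 1)) x
    (EuclideanSpace.single i 1)

/-- The `(i,j)` entry of the Hessian matrix of `u` at `x`. -/
noncomputable def hessianEntry {n : ℕ} (u : EuclideanSpace ℝ (Fin n) → ℝ)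
    (x : EuclideanSpace ℝ (Fin n)) (i j : Fin n) : ℝ :=
  fderiv ℝ (fun y => fderiv ℝ u y (EuclideanSpace.single j 1)) x (EuclideanSpace.single i 1)

/-- A regular domain: a nonempty connected open set with smooth boundary.
Smoothness of the boundary is expressed by a smooth defining function `ρ`
with nonvanishing gradient on the boundary. -/
def IsRegularDomain {n : ℕ} (Ω : Set (EuclideanSpace ℝ (Fin n))) : Prop :=
  IsOpen Ω ∧ IsConnected Ω ∧
    ∃ ρ : EuclideanSpace ℝ (Fin n) → ℝ, ContDiff ℝ (⊤ : ℕ∞) ρ ∧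
      Ω = {x | 0 < ρ x} ∧ frontier Ω = {x | ρ x = 0} ∧
      ∀ x ∈ frontier Ω, gradient ρ x ≠ 0

/-- **Step 1 of Proposition 3.2.** Under the hypotheses of Theorem 1.2, if `u` is
nonconstant, `P ≤ α := max {0, κ² + 2F(0)}` on `Ω`, and `P(x₀) = α` at some
`x₀ ∈ Ω`, then `∇u(x₀) ≠ 0`. -/
theorem gradient_nonzero_at_max
    {n : ℕ} (hn : 2 ≤ n) (Ω : Set (EuclideanSpace ℝ (Fin n)))
    (hΩ : IsRegularDomain Ω)
    (F : ℝ → ℝ) (hF : ContDiff ℝ 2 F) (hFneg : ∀ t, F t ≤ 0)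
    (f : ℝ → ℝ) (hf : ∀ t, deriv F t = f t)
    (κ : ℝ) (hκ : 0 ≤ κ)
    (u : EuclideanSpace ℝ (Fin n) → ℝ)
    (hu3 : ContDiffOn ℝ 3 u Ω) (hu1 : ContDiffOn ℝ 1 u (closure Ω))
    (hbdd : ∃ C : ℝ, ∀ x ∈ Ω, |u x| ≤ C)
    (hnonconst : ¬ ∀ x ∈ Ω, ∀ y ∈ Ω, u x = u y)
    (heq : ∀ x ∈ Ω, laplacian u x + f (u x) = 0)
    (hpos : ∀ x ∈ Ω, 0 < u x)
    (hdir : ∀ x ∈ frontier Ω, u x = 0)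
    (hneu : ∀ x ∈ frontier Ω, ‖gradient u x‖ = κ)
    (P : EuclideanSpace ℝ (Fin n) → ℝ)
    (hP : P = fun x => ‖gradient u x‖ ^ 2 + 2 * F (u x))
    (α : ℝ) (hα : α = max 0 (κ ^ 2 + 2 * F 0))
    (hPle : ∀ x ∈ Ω, P x ≤ α)
    (x₀ : EuclideanSpace ℝ (Fin n)) (hx₀ : x₀ ∈ Ω) (hPx₀ : P x₀ = α) :
    gradient u x₀ ≠ 0 := by
  intro hgrad
  obtain ⟨hopen, hconn, -⟩ := hΩ
  obtain ⟨C, hC⟩ := hbdd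
  set t₀ := u x₀ with ht₀
  -- norm of gradient equals norm of fderiv
  have hgn : ∀ x, ‖gradient u x‖ = ‖fderiv ℝ u x‖ := fun x => by
    rw [gradient]; exact LinearIsometryEquiv.norm_map _ _
  -- α = 2 F t₀, hence α = 0 and F t₀ = 0
  have hα0 : 0 ≤ α := hα ▸ le_max_left _ _
  have h2F : 2 * F t₀ = α := by
    have := hPx₀
    rw [hP] at this
    simpa [hgrad] using this
  have hFt₀ : F t₀ = 0 := by nlinarith [hFneg t₀]
  have hαz : α = 0 := by linarith
  -- F has a global max at t₀, so deriv F t₀ = 0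
  have hdiffF : Differentiable ℝ F := hF.differentiable (by norm_num)
  have hderF : deriv F t₀ = 0 := by
    have hmax : IsLocalMax F t₀ :=
      Filter.Eventually.of_forall fun t => by rw [hFt₀]; exact hFneg t
    exact hmax.deriv_eq_zero
  -- deriv F is C¹
  have hF1 : ContDiff ℝ 1 (deriv F) := by
    have := ContDiff.iterate_deriv' 1 1 (f := F) (by exact_mod_cast hF)
    simpa using this
  have hF1d : Differentiable ℝ (deriv F) := hF1.differentiable one_ne_zero
  have hF2c : Continuous (deriv (deriv F)) := (contDiff_one_iff_deriv.mp hF1).2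
  -- bound second derivative on the compact interval
  obtain ⟨M, hM⟩ := (isCompact_Icc (a := -C) (b := C)).exists_bound_of_continuousOn
    hF2c.continuousOn
  set M' : ℝ := max M 0 with hM'
  have hM'0 : 0 ≤ M' := le_max_right _ _
  have ht₀mem : t₀ ∈ Icc (-C) C := abs_le.mp (hC x₀ hx₀)
  -- |deriv F t| ≤ M' |t - t₀| on Icc (-C) C
  have hderbd : ∀ t ∈ Icc (-C) C, |deriv F t| ≤ M' * |t - t₀| := by
    intro t ht
    have := (convex_Icc (-C) C).norm_image_sub_le_of_norm_deriv_le (f := deriv F) (C := M')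
      (fun s _ => hF1d s) (fun s hs => le_trans (hM s hs) (le_max_left _ _))
      ht₀mem ht
    simpa [hderF, Real.norm_eq_abs] using this
  -- |F t| ≤ M' (t - t₀)² on Icc (-C) C
  have hFbd : ∀ t ∈ Icc (-C) C, -(2 * F t) ≤ 2 * M' * (t - t₀) ^ 2 := by
    intro t ht
    have hsub : Icc (min t t₀) (max t t₀) ⊆ Icc (-C) C := by
      intro s hs
      constructor
      · exact le_trans (le_min ht.1 ht₀mem.1) hs.1
      · exact le_trans hs.2 (max_le ht.2 ht₀mem.2)
    have key : ∀ s ∈ Icc (min t t₀) (max t t₀), ‖deriv F s‖ ≤ M' * |t - t₀| := by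
      intro s hs
      have h1 : |s - t₀| ≤ |t - t₀| := by
        rw [abs_sub_le_iff]
        constructor
        · have := hs.2
          have := le_max_left t t₀
          have := le_max_right t t₀
          have := min_le_left t t₀
          have := min_le_right t t₀
          rcases le_total t t₀ with h | h
          · calc s - t₀ ≤ max t t₀ - t₀ := by linarith [hs.2]
              _ = 0 := by rw [max_eq_right h]; ring
              _ ≤ |t - t₀| := abs_nonneg _
          · calc s - t₀ ≤ max t t₀ - t₀ := by linarith [hs.2]
              _ = t - t₀ := by rw [max_eq_left h]
              _ ≤ |t - t₀| := le_abs_self _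
        · rcases le_total t t₀ with h | h
          · calc t₀ - s ≤ t₀ - min t t₀ := by linarith [hs.1]
              _ = t₀ - t := by rw [min_eq_left h]
              _ ≤ |t - t₀| := by rw [abs_sub_comm]; exact le_abs_self _
          · calc t₀ - s ≤ t₀ - min t t₀ := by linarith [hs.1]
              _ = 0 := by rw [min_eq_right h]; ring
              _ ≤ |t - t₀| := abs_nonneg _
      calc ‖deriv F s‖ = |deriv F s| := rfl
        _ ≤ M' * |s - t₀| := hderbd s (hsub hs)
        _ ≤ M' * |t - t₀| := by exact mul_le_mul_of_nonneg_left h1 hM'0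
    have hmem_t : t ∈ Icc (min t t₀) (max t t₀) := ⟨min_le_left _ _, le_max_left _ _⟩
    have hmem_t₀ : t₀ ∈ Icc (min t t₀) (max t t₀) := ⟨min_le_right _ _, le_max_right _ _⟩
    have := (convex_Icc (min t t₀) (max t t₀)).norm_image_sub_le_of_norm_deriv_le (f := F) (C := M' * |t - t₀|)
      (fun s _ => hdiffF s) key hmem_t₀ hmem_t
    rw [hFt₀, sub_zero, Real.norm_eq_abs, Real.norm_eq_abs] at this
    have habs : |F t| ≤ M' * (t - t₀) ^ 2 := by
      calc |F t| ≤ M' * |t - t₀| * |t - t₀| := this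
        _ = M' * (t - t₀) ^ 2 := by rw [mul_assoc, ← abs_mul,
              show (t - t₀) * (t - t₀) = (t - t₀) ^ 2 from (sq _).symm, abs_sq]
    have := neg_abs_le (F t)
    nlinarith
  -- gradient bound on Ω
  set c : ℝ := Real.sqrt (2 * M') with hc
  have hc0 : 0 ≤ c := Real.sqrt_nonneg _
  have hgradbd : ∀ z ∈ Ω, ‖fderiv ℝ u z‖ ≤ c * |u z - t₀| := by
    intro z hz
    have hPz : ‖gradient u z‖ ^ 2 + 2 * F (u z) ≤ 0 := by
      have := hPle z hz
      rw [hP, hαz] at this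
      simpa using this
    have h1 : ‖gradient u z‖ ^ 2 ≤ -(2 * F (u z)) := by linarith
    have h2 : -(2 * F (u z)) ≤ 2 * M' * (u z - t₀) ^ 2 :=
      hFbd (u z) (abs_le.mp (hC z hz))
    have h3 : ‖fderiv ℝ u z‖ ^ 2 ≤ (c * |u z - t₀|) ^ 2 := by
      rw [mul_pow, hc, Real.sq_sqrt (by linarith), sq_abs]
      rw [hgn] at h1
      linarith
    have h4 := Real.sqrt_le_sqrt h3
    rwa [Real.sqrt_sq (norm_nonneg _), Real.sqrt_sq (by positivity)] at h4
  -- continuity/differentiability of u in Ω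
  have hudiff : ∀ z ∈ Ω, DifferentiableAt ℝ u z := fun z hz =>
    (hu3.contDiffAt (hopen.mem_nhds hz)).differentiableAt (by norm_num)
  -- key: local constancy via Gronwall
  have hlocal : ∀ x ∈ Ω, u x = t₀ → ∀ r > 0, ball x r ⊆ Ω →
      ∀ y ∈ ball x r, u y = t₀ := by
    intro x hx hux r hr hball y hy
    set v := y - x with hv
    set γ : ℝ → EuclideanSpace ℝ (Fin n) := fun s => x + s • v with hγ
    have hγmem : ∀ s ∈ Icc (0:ℝ) 1, γ s ∈ ball x r := by
      intro s hs
      rw [mem_ball, dist_eq_norm]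
      have : γ s - x = s • v := by simp [hγ]
      rw [this, norm_smul]
      calc ‖s‖ * ‖v‖ ≤ 1 * ‖v‖ := by
            apply mul_le_mul_of_nonneg_right _ (norm_nonneg _)
            rw [Real.norm_eq_abs, abs_le]; exact ⟨by linarith [hs.1], hs.2⟩
        _ = ‖y - x‖ := by rw [one_mul]
        _ < r := by rw [← dist_eq_norm]; exact mem_ball.mp hy
    set w : ℝ → ℝ := fun s => u (γ s) - t₀ with hw
    have hwderiv : ∀ s ∈ Icc (0:ℝ) 1, HasDerivAt w (fderiv ℝ u (γ s) v) s := by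
      intro s hs
      have hγd : HasDerivAt γ v s := by
        have : HasDerivAt (fun s : ℝ => s • v) ((1:ℝ) • v) s :=
          (hasDerivAt_id s).smul_const v
        simpa [hγ] using this.const_add x
      have hud : HasFDerivAt u (fderiv ℝ u (γ s)) (γ s) :=
        (hudiff (γ s) (hball (hγmem s hs))).hasFDerivAt
      exact (hud.comp_hasDerivAt s hγd).sub_const t₀
    have hwcont : ContinuousOn w (Icc 0 1) := fun s hs =>
      ((hwderiv s hs).continuousAt).continuousWithinAt
    have hw0 : ‖w 0‖ ≤ 0 := by
      simp [hw, hγ, hux]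
    have hbound : ∀ s ∈ Ico (0:ℝ) 1, ‖fderiv ℝ u (γ s) v‖ ≤ (c * ‖v‖) * ‖w s‖ + 0 := by
      intro s hs
      have hmem : γ s ∈ Ω := hball (hγmem s ⟨hs.1, le_of_lt hs.2⟩)
      calc ‖fderiv ℝ u (γ s) v‖ ≤ ‖fderiv ℝ u (γ s)‖ * ‖v‖ :=
            ContinuousLinearMap.le_opNorm _ _
        _ ≤ (c * |u (γ s) - t₀|) * ‖v‖ :=
            mul_le_mul_of_nonneg_right (hgradbd _ hmem) (norm_nonneg _)
        _ = (c * ‖v‖) * ‖w s‖ + 0 := by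
            rw [add_zero, hw]; simp [Real.norm_eq_abs]; ring
    have := norm_le_gronwallBound_of_norm_deriv_right_le hwcont
      (fun s hs => (hwderiv s ⟨hs.1, le_of_lt hs.2⟩).hasDerivWithinAt)
      hw0 hbound 1 (by norm_num)
    rw [gronwallBound_ε0_δ0] at this
    have hw1 : w 1 = 0 := by
      have := norm_le_zero_iff.mp this
      exact this
    have : u y - t₀ = 0 := by
      have hgy : γ 1 = y := by simp [hγ, hv]
      have hw1' : u (γ 1) - t₀ = 0 := hw1
      rwa [hgy] at hw1'
    linarith
  -- the set S = {x ∈ Ω | u x = t₀} is open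
  have hScont : ContinuousOn u Ω := hu3.continuousOn
  set S : Set (EuclideanSpace ℝ (Fin n)) := {x | x ∈ Ω ∧ u x = t₀} with hS
  have hSopen : IsOpen S := by
    rw [Metric.isOpen_iff]
    rintro x ⟨hxΩ, hxu⟩
    obtain ⟨r, hr, hball⟩ := Metric.isOpen_iff.mp hopen x hxΩ
    exact ⟨r, hr, fun y hy => ⟨hball hy, hlocal x hxΩ hxu r hr hball y hy⟩⟩
  -- the set T = {x ∈ Ω | u x ≠ t₀} is open
  set T : Set (EuclideanSpace ℝ (Fin n)) := Ω ∩ u ⁻¹' {t₀}ᶜ with hT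
  have hTopen : IsOpen T := hScont.isOpen_inter_preimage hopen isOpen_compl_singleton
  -- connectedness: u ≡ t₀ on Ω
  have hall : ∀ x ∈ Ω, u x = t₀ := by
    by_contra hcon
    push_neg at hcon
    obtain ⟨z, hzΩ, hz⟩ := hcon
    have := hconn.isPreconnected S T hSopen hTopen
      (fun x hx => by
        by_cases h : u x = t₀
        · exact Or.inl ⟨hx, h⟩
        · exact Or.inr ⟨hx, h⟩)
      ⟨x₀, hx₀, hx₀, rfl⟩ ⟨z, hzΩ, hzΩ, hz⟩
    obtain ⟨p, -, ⟨-, hp1⟩, ⟨-, hp2⟩⟩ := this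
    exact hp2 hp1
  exact hnonconst fun x hx y hy => by rw [hall x hx, hall y hy]
end

section
/- Let Ω ⊂ ℝⁿ be a nonempty connected open set, F ∈ C²(ℝ) with f = F', and let u ∈ C³(Ω) solve Δu + f(u) = 0 in Ω with ∇u(x) ≠ 0 for all x ∈ Ω. Suppose the P-function P(x) = ‖∇u(x)‖² + 2F(u(x)) is identically equal to a constant α on Ω, so that in particular α − 2F(u(x)) = ‖∇u(x)‖² > 0 for all x ∈ Ω. Fix u₀ in the range of u and define G(t) = ∫_{u₀}^{t} (α − 2F(s))^{−1/2} ds on the range of u. Then the function v = G ∘ u is harmonic in Ω with ‖∇v‖ ≡ 1; consequently there exist a unit vector a ∈ ℝⁿ, b ∈ ℝ, and a one-variable function g such that u(x) = g(a·x + b) for all x ∈ Ω, i.e. u is 1-dimensional. -/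
open scoped RealInnerProductSpace
open Metric Set Filter

variable {n : ℕ}

local notation "E" => EuclideanSpace ℝ (Fin n)

lemma inner_gradient_eq (f : E → ℝ) (x y : E) :
    ⟪gradient f x, y⟫ = fderiv ℝ f x y := by
  simp [gradient, InnerProductSpace.toDual_symm_apply]

lemma gradient_coord (f : E → ℝ) (x : E) (i : Fin n) :
    gradient f x i = fderiv ℝ f x (EuclideanSpace.single i 1) := by
  rw [← inner_gradient_eq, EuclideanSpace.inner_single_right]
  simp

lemma norm_gradient_sq (f : E → ℝ) (x : E) :
    ‖gradient f x‖ ^ 2 = ∑ i, (fderiv ℝ f x (EuclideanSpace.single i 1)) ^ 2 := by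
  rw [EuclideanSpace.norm_eq, Real.sq_sqrt (by positivity)]
  refine Finset.sum_congr rfl fun i _ => ?_
  rw [← gradient_coord]; simp [Real.norm_eq_abs, sq_abs]

/-- decomposition of a Euclidean vector in the standard basis -/
lemma euclidean_decomp (w : E) :
    w = ∑ i, w i • EuclideanSpace.single i (1:ℝ) := by
  ext j
  rw [show (∑ i, w i • EuclideanSpace.single i (1:ℝ)) j
      = ∑ i, (w i • EuclideanSpace.single i (1:ℝ)) j from by rw [WithLp.ofLp_sum]; exact Finset.sum_apply j _ _]
  simp [EuclideanSpace.single_apply]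

lemma clm_eq_zero_of_basis (L : E →L[ℝ] ℝ)
    (h : ∀ i, L (EuclideanSpace.single i 1) = 0) : L = 0 := by
  ext w
  rw [show (L w : ℝ) = L (∑ i, w i • EuclideanSpace.single i (1:ℝ)) by rw [← euclidean_decomp]]
  simp [h]

/-- A differentiable function with vanishing derivative on an open preconnected set
is constant there. -/
lemma const_of_fderiv_zero {X : Type*} [NormedAddCommGroup X] [NormedSpace ℝ X]
    {Ω : Set E} (hΩo : IsOpen Ω) (hΩc : IsPreconnected Ω) (φ : E → X)
    (hdiff : ∀ x ∈ Ω, DifferentiableAt ℝ φ x)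
    (hzero : ∀ x ∈ Ω, fderiv ℝ φ x = 0) :
    ∀ x ∈ Ω, ∀ y ∈ Ω, φ x = φ y := by
  -- local constancy on balls
  have hloc : ∀ z ∈ Ω, ∀ᶠ y in nhds z, φ y = φ z := by
    intro z hz
    obtain ⟨r, hr, hball⟩ := Metric.isOpen_iff.1 hΩo z hz
    filter_upwards [Metric.ball_mem_nhds z hr] with y hy
    refine (convex_ball z r).is_const_of_fderivWithin_eq_zero
      (fun w hw => (hdiff w (hball hw)).differentiableWithinAt) ?_ hy (mem_ball_self hr)
    intro w hw
    rw [fderivWithin_of_isOpen Metric.isOpen_ball hw]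
    exact hzero w (hball hw)
  intro x hx y hy
  -- clopen argument
  set A : Set E := {z | φ z = φ x}
  by_contra hne
  have hU : IsOpen {z ∈ Ω | φ z = φ x} := by
    rw [isOpen_iff_mem_nhds]
    rintro z ⟨hz, hzx⟩
    obtain ⟨r, hr, hball⟩ := Metric.isOpen_iff.1 hΩo z hz
    filter_upwards [Metric.ball_mem_nhds z hr, hloc z hz] with w hw hw2
    exact ⟨hball hw, hw2.trans hzx⟩
  have hV : IsOpen {z ∈ Ω | φ z ≠ φ x} := by
    rw [isOpen_iff_mem_nhds]
    rintro z ⟨hz, hzx⟩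
    filter_upwards [hΩo.mem_nhds hz, hloc z hz] with w hw hw2
    exact ⟨hw, hw2.symm ▸ hzx⟩
  obtain ⟨p, hp⟩ := hΩc {z ∈ Ω | φ z = φ x} {z ∈ Ω | φ z ≠ φ x} hU hV
    (fun z hz => by by_cases h : φ z = φ x <;> [exact Or.inl ⟨hz, h⟩; exact Or.inr ⟨hz, h⟩])
    ⟨x, hx, hx, rfl⟩ ⟨y, hy, hy, fun h => hne (h ▸ rfl)⟩
  exact hp.2.2.2 hp.2.1.2

section G
variable {F f : ℝ → ℝ} {α u₀ : ℝ}

lemma hSopen (hF : Continuous F) : IsOpen {s : ℝ | 0 < α - 2 * F s} :=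
  isOpen_lt continuous_const (continuous_const.sub (continuous_const.mul hF))

lemma gp_contDiffOn (hF : ContDiff ℝ 2 F) :
    ContDiffOn ℝ 2 (fun t => (α - 2 * F t) ^ (-(1/2) : ℝ)) {s : ℝ | 0 < α - 2 * F s} := by
  intro t ht
  refine (ContDiffAt.comp t (Real.contDiffAt_rpow_const_of_ne (ne_of_gt ht)) ?_).contDiffWithinAt
  exact (contDiff_const.sub (contDiff_const.mul hF)).contDiffAt

lemma gp_continuousAt (hF : Continuous F) {t : ℝ} (ht : 0 < α - 2 * F t) :
    ContinuousAt (fun s => (α - 2 * F s) ^ (-(1/2) : ℝ)) t := by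
  exact ContinuousAt.rpow_const
    ((continuous_const.sub (continuous_const.mul hF)).continuousAt) (Or.inl (ne_of_gt ht))

lemma gp_hasDerivAt (hF : ContDiff ℝ 2 F) (hF' : ∀ t, deriv F t = f t) {t : ℝ}
    (ht : 0 < α - 2 * F t) :
    HasDerivAt (fun s => (α - 2 * F s) ^ (-(1/2) : ℝ))
      (f t * (α - 2 * F t) ^ (-(3/2) : ℝ)) t := by
  have hFd : HasDerivAt F (f t) t := by
    rw [← hF' t]
    exact (hF.differentiable (by norm_num)).differentiableAt.hasDerivAt
  have hin : HasDerivAt (fun s => α - 2 * F s) (-(2 * f t)) t :=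
    (hFd.const_mul 2).const_sub α
  have hout := Real.hasDerivAt_rpow_const (x := α - 2 * F t) (p := (-(1/2) : ℝ))
    (Or.inl (ne_of_gt ht))
  have h2 := HasDerivAt.comp t hout hin
  refine h2.congr_deriv ?_
  rw [show (-(1/2) : ℝ) - 1 = -(3/2) by norm_num]
  ring

lemma hTopen (hF : Continuous F) :
    IsOpen {t : ℝ | uIcc u₀ t ⊆ {s : ℝ | 0 < α - 2 * F s}} := by
  rw [isOpen_iff_mem_nhds]
  intro t ht
  obtain ⟨δ, hδ, hth⟩ := (isCompact_uIcc (a := u₀) (b := t)).exists_thickening_subset_open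
    (hSopen hF) ht
  filter_upwards [Metric.ball_mem_nhds t hδ] with t' ht'
  intro s hs
  rcases uIcc_subset_uIcc_union_uIcc (b := t) hs with h | h
  · exact hth (Metric.self_subset_thickening hδ _ h)
  · refine hth (Metric.mem_thickening_iff.2 ⟨t, right_mem_uIcc, ?_⟩)
    calc dist s t ≤ dist t t' := Real.dist_le_of_mem_uIcc h left_mem_uIcc
    _ < δ := by rw [dist_comm]; exact ht'

end G

section G2
variable {F f : ℝ → ℝ} {α u₀ : ℝ}

lemma G_intervalIntegrable (hF : Continuous F) {t : ℝ}
    (ht : uIcc u₀ t ⊆ {s : ℝ | 0 < α - 2 * F s}) :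
    IntervalIntegrable (fun s => (α - 2 * F s) ^ (-(1/2) : ℝ)) MeasureTheory.volume u₀ t := by
  apply ContinuousOn.intervalIntegrable
  exact fun s hs => (gp_continuousAt hF (ht hs)).continuousWithinAt

lemma G_hasDerivAt (hF : Continuous F) {t : ℝ}
    (ht : uIcc u₀ t ⊆ {s : ℝ | 0 < α - 2 * F s}) :
    HasDerivAt (fun r => ∫ s in u₀..r, (α - 2 * F s) ^ (-(1/2) : ℝ))
      ((α - 2 * F t) ^ (-(1/2) : ℝ)) t := by
  apply intervalIntegral.integral_hasDerivAt_right (G_intervalIntegrable hF ht)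
  · refine ⟨{s : ℝ | 0 < α - 2 * F s}, (hSopen hF).mem_nhds (ht right_mem_uIcc), ?_⟩
    exact ContinuousOn.aestronglyMeasurable
      (fun s hs => (gp_continuousAt hF hs).continuousWithinAt) (hSopen hF).measurableSet
  · exact gp_continuousAt hF (ht right_mem_uIcc)

lemma G_contDiffOn (hF : ContDiff ℝ 2 F) :
    ContDiffOn ℝ 3 (fun r => ∫ s in u₀..r, (α - 2 * F s) ^ (-(1/2) : ℝ))
      {t : ℝ | uIcc u₀ t ⊆ {s : ℝ | 0 < α - 2 * F s}} := by
  have hT : IsOpen {t : ℝ | uIcc u₀ t ⊆ {s : ℝ | 0 < α - 2 * F s}} := hTopen hF.continuous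
  have h3 : ((3:ℕ) : WithTop ℕ∞) = 2 + 1 := by norm_num
  rw [show (3 : WithTop ℕ∞) = 2 + 1 by norm_num]
  rw [contDiffOn_succ_iff_deriv_of_isOpen hT]
  refine ⟨fun t ht => ((G_hasDerivAt hF.continuous ht).differentiableAt).differentiableWithinAt,
    by simp, ?_⟩
  refine ContDiffOn.congr (f := fun t : ℝ => (α - 2 * F t) ^ (-(1/2) : ℝ))
    ((gp_contDiffOn hF).mono (fun t ht => ht right_mem_uIcc)) ?_
  exact fun t ht => (G_hasDerivAt hF.continuous ht).deriv

lemma G_strictMonoOn (hF : Continuous F) {U : Set ℝ} (hU : U.OrdConnected) (hu₀U : u₀ ∈ U)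
    (hUS : U ⊆ {s : ℝ | 0 < α - 2 * F s}) :
    StrictMonoOn (fun r => ∫ s in u₀..r, (α - 2 * F s) ^ (-(1/2) : ℝ)) U := by
  intro s hs t ht hst
  have hs' : uIcc u₀ s ⊆ {s : ℝ | 0 < α - 2 * F s} := (hU.uIcc_subset hu₀U hs).trans hUS
  have ht' : uIcc u₀ t ⊆ {s : ℝ | 0 < α - 2 * F s} := (hU.uIcc_subset hu₀U ht).trans hUS
  have key : (0:ℝ) < ∫ r in s..t, (α - 2 * F r) ^ (-(1/2) : ℝ) := by
    apply intervalIntegral.intervalIntegral_pos_of_pos_on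
    · apply ContinuousOn.intervalIntegrable
      exact fun r hr => (gp_continuousAt hF (((hU.uIcc_subset hs ht).trans hUS) hr)).continuousWithinAt
    · intro r hr
      have : r ∈ U := hU.uIcc_subset hs ht (by
        rw [uIcc_of_le hst.le]; exact Ioo_subset_Icc_self hr)
      exact Real.rpow_pos_of_pos (hUS this) _
    · exact hst
  have := intervalIntegral.integral_interval_sub_left
    (G_intervalIntegrable hF ht') (G_intervalIntegrable hF hs')
  simp only []
  linarith [this]
end G2

lemma clm2_eq_zero_of_basis {n : ℕ} (M : EuclideanSpace ℝ (Fin n) →L[ℝ] (EuclideanSpace ℝ (Fin n) →L[ℝ] ℝ))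
    (h : ∀ i, M (EuclideanSpace.single i 1) = 0) : M = 0 := by
  ext w z
  rw [show (M w : _) = M (∑ i, w i • EuclideanSpace.single i (1:ℝ)) by rw [← euclidean_decomp]]
  simp [h]

lemma fderiv_apply_basis {n : ℕ} {w : EuclideanSpace ℝ (Fin n) → (EuclideanSpace ℝ (Fin n) →L[ℝ] ℝ)}
    {x : EuclideanSpace ℝ (Fin n)} (hw : DifferentiableAt ℝ w x) (ξ z : EuclideanSpace ℝ (Fin n)) :
    fderiv ℝ (fun y => w y ξ) x z = fderiv ℝ w x z ξ := by
  have h := ((ContinuousLinearMap.apply ℝ ℝ ξ).hasFDerivAt.comp x hw.hasFDerivAt).fderiv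
  rw [show (fun y => w y ξ) = (ContinuousLinearMap.apply ℝ ℝ ξ) ∘ w from rfl, h]
  rfl
/-- **Step 2 of Proposition 3.2.** If `u ∈ C³(Ω)` solves `Δu + f(u) = 0` on a
nonempty connected open set `Ω`, has no critical points, and the `P`-function
`P = ‖∇u‖² + 2F(u)` is identically equal to `α` on `Ω`, then, setting
`G(t) = ∫_{u₀}^t (α − 2F(s))^{-1/2} ds`, the function `v = G ∘ u` is harmonic
with `‖∇v‖ ≡ 1` on `Ω`, and `u` is 1-dimensional. -/
theorem one_dimensional_from_constant_P
    {n : ℕ} (Ω : Set (EuclideanSpace ℝ (Fin n)))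
    (hΩo : IsOpen Ω) (hΩc : IsConnected Ω)
    (F f : ℝ → ℝ) (hF : ContDiff ℝ 2 F) (hF' : ∀ t, deriv F t = f t)
    (u : EuclideanSpace ℝ (Fin n) → ℝ) (hu : ContDiffOn ℝ 3 u Ω)
    (heq : ∀ x ∈ Ω, laplacian u x + f (u x) = 0)
    (hcrit : ∀ x ∈ Ω, gradient u x ≠ 0)
    (α : ℝ)
    (hPconst : ∀ x ∈ Ω, ‖gradient u x‖ ^ 2 + 2 * F (u x) = α)
    (u₀ : ℝ) (hu₀ : ∃ x ∈ Ω, u x = u₀)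
    (G : ℝ → ℝ)
    (hG : G = fun t => ∫ s in u₀..t, (α - 2 * F s) ^ (-(1/2) : ℝ)) :
    (∀ x ∈ Ω, laplacian (fun y => G (u y)) x = 0) ∧
    (∀ x ∈ Ω, ‖gradient (fun y => G (u y)) x‖ = 1) ∧
    ∃ (a : EuclideanSpace ℝ (Fin n)) (b : ℝ) (g : ℝ → ℝ),
      ‖a‖ = 1 ∧ ∀ x ∈ Ω, u x = g (⟪a, x⟫ + b) := by
  classical
  set S : Set ℝ := {s : ℝ | 0 < α - 2 * F s} with hSdef
  set T : Set ℝ := {t : ℝ | uIcc u₀ t ⊆ S} with hTdef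
  set U : Set ℝ := u '' Ω with hUdef
  set e : Fin n → EuclideanSpace ℝ (Fin n) := fun i => EuclideanSpace.single i (1:ℝ) with hedef
  have huC : ∀ x ∈ Ω, ContDiffAt ℝ 3 u x := fun x hx => hu.contDiffAt (hΩo.mem_nhds hx)
  have hUS : U ⊆ S := by
    rintro _ ⟨x, hx, rfl⟩
    have h1 : (0:ℝ) < ‖gradient u x‖ ^ 2 :=
      pow_pos (norm_pos_iff.2 (hcrit x hx)) 2
    have := hPconst x hx
    simp only [hSdef, Set.mem_setOf_eq]
    linarith
  have hUord : U.OrdConnected :=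
    ((hΩc.image u hu.continuousOn).isPreconnected).ordConnected
  have hu₀U : u₀ ∈ U := by obtain ⟨x, hx, hxe⟩ := hu₀; exact ⟨x, hx, hxe⟩
  have hUT : U ⊆ T := fun t ht => (hUord.uIcc_subset hu₀U ht).trans hUS
  have hTop : IsOpen T := hTopen hF.continuous
  have hGd : ∀ t ∈ T, HasDerivAt G ((α - 2*F t) ^ (-(1/2):ℝ)) t := by
    rw [hG]; exact fun t ht => G_hasDerivAt hF.continuous ht
  have hG3 : ContDiffOn ℝ 3 G T := by rw [hG]; exact G_contDiffOn hF
  set v : EuclideanSpace ℝ (Fin n) → ℝ := fun y => G (u y) with hvdef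
  have huU : ∀ x ∈ Ω, u x ∈ U := fun x hx => ⟨x, hx, rfl⟩
  have hvC : ∀ x ∈ Ω, ContDiffAt ℝ 3 v x := fun x hx =>
    (hG3.contDiffAt (hTop.mem_nhds (hUT (huU x hx)))).comp x (huC x hx)
  have hud : ∀ x ∈ Ω, DifferentiableAt ℝ u x := fun x hx =>
    (huC x hx).differentiableAt (by norm_num)
  have hvfd : ∀ x ∈ Ω, fderiv ℝ v x
      = (α - 2*F (u x)) ^ (-(1/2):ℝ) • fderiv ℝ u x := fun x hx =>
    ((hGd _ (hUT (huU x hx))).comp_hasFDerivAt x (hud x hx).hasFDerivAt).fderiv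
  -- the value c = α - 2 F (u x) equals ‖∇u x‖²
  have hc : ∀ x ∈ Ω, 0 < α - 2 * F (u x) := fun x hx => hUS (huU x hx)
  have hnorm2 : ∀ x ∈ Ω, ‖gradient u x‖ ^ 2 = α - 2 * F (u x) := fun x hx => by
    have := hPconst x hx; linarith
  -- sum of squares of partials of u
  have husum : ∀ x ∈ Ω, ∑ i, (fderiv ℝ u x (e i)) ^ 2 = α - 2 * F (u x) := fun x hx => by
    rw [← norm_gradient_sq, hnorm2 x hx]
  -- Conjunct 1 : v is harmonic
  have hlap : ∀ x ∈ Ω, laplacian v x = 0 := by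
    intro x hx
    have hcx := hc x hx
    have hA : HasFDerivAt (fderiv ℝ u) (fderiv ℝ (fderiv ℝ u) x) x :=
      (((huC x hx).fderiv_right (m := 2) (by norm_num)).differentiableAt (by norm_num)).hasFDerivAt
    set A := fderiv ℝ (fderiv ℝ u) x with hAdef
    have hpi : ∀ i, HasFDerivAt (fun y => fderiv ℝ u y (e i))
        ((ContinuousLinearMap.apply ℝ ℝ (e i)).comp A) x := fun i =>
      (ContinuousLinearMap.apply ℝ ℝ (e i)).hasFDerivAt.comp x hA
    have hg1 : HasFDerivAt (fun y => (α - 2*F (u y)) ^ (-(1/2):ℝ))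
        ((f (u x) * (α - 2*F (u x)) ^ (-(3/2):ℝ)) • fderiv ℝ u x) x :=
      (gp_hasDerivAt hF hF' hcx).comp_hasFDerivAt x (hud x hx).hasFDerivAt
    have hterm : ∀ i, fderiv ℝ (fun y => fderiv ℝ v y (e i)) x (e i)
        = (α - 2*F (u x)) ^ (-(1/2):ℝ) * A (e i) (e i)
          + f (u x) * (α - 2*F (u x)) ^ (-(3/2):ℝ) * (fderiv ℝ u x (e i))^2 := by
      intro i
      have hev : (fun y => fderiv ℝ v y (e i))
          =ᶠ[nhds x] (fun y => (α - 2*F (u y)) ^ (-(1/2):ℝ) * fderiv ℝ u y (e i)) := by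
        filter_upwards [hΩo.mem_nhds hx] with y hy
        rw [hvfd y hy]; rfl
      rw [hev.fderiv_eq, (hg1.fun_mul (hpi i)).fderiv]
      simp only [ContinuousLinearMap.add_apply, ContinuousLinearMap.smul_apply,
        ContinuousLinearMap.coe_comp', Function.comp_apply,
        ContinuousLinearMap.apply_apply, smul_eq_mul]
      ring
    have hlapu : ∑ i, A (e i) (e i) = - f (u x) := by
      have h0 := heq x hx
      have h1 : laplacian u x = ∑ i, fderiv ℝ (fun y => fderiv ℝ u y (e i)) x (e i) := by
        rw [hedef]; rfl
      have h2 : ∀ i, fderiv ℝ (fun y => fderiv ℝ u y (e i)) x (e i) = A (e i) (e i) := by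
        intro i; rw [(hpi i).fderiv]; rfl
      rw [h1] at h0
      simp only [h2] at h0
      linarith
    have hkey : (α - 2*F (u x)) ^ (-(3/2):ℝ) * (α - 2*F (u x))
        = (α - 2*F (u x)) ^ (-(1/2):ℝ) := by
      nth_rewrite 2 [← Real.rpow_one (α - 2*F (u x))]
      rw [← Real.rpow_add hcx]; norm_num
    have h3 : laplacian v x = ∑ i, fderiv ℝ (fun y => fderiv ℝ v y (e i)) x (e i) := by
      rw [hedef]; rfl
    rw [h3]
    simp only [hterm]
    rw [Finset.sum_add_distrib, ← Finset.mul_sum, ← Finset.mul_sum, hlapu, husum x hx]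
    linear_combination f (u x) * hkey
  -- partial-sums identity for v
  have hvsum : ∀ x ∈ Ω, ∑ i, (fderiv ℝ v x (e i)) ^ 2 = 1 := by
    intro x hx
    have hcx := hc x hx
    simp only [hvfd x hx, ContinuousLinearMap.coe_smul', Pi.smul_apply, smul_eq_mul, mul_pow,
      ← Finset.mul_sum, husum x hx]
    rw [← Real.rpow_natCast ((α - 2*F (u x)) ^ (-(1/2):ℝ)) 2, ← Real.rpow_mul hcx.le]
    rw [show (-(1/2):ℝ) * (2:ℕ) = -1 by norm_num, Real.rpow_neg_one]
    field_simp
  have hnormv : ∀ x ∈ Ω, ‖gradient v x‖ = 1 := by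
    intro x hx
    have h2 : ‖gradient v x‖ ^ 2 = 1 := by rw [norm_gradient_sq]; exact hvsum x hx
    nlinarith [norm_nonneg (gradient v x)]
  refine ⟨hlap, hnormv, ?_⟩
  -- Part 3: v is affine, hence u is one-dimensional
  have hWC : ∀ x ∈ Ω, ContDiffAt ℝ 2 (fderiv ℝ v) x := fun x hx =>
    (hvC x hx).fderiv_right (m := 2) (by norm_num)
  have hpC : ∀ (i : Fin n), ∀ x ∈ Ω, ContDiffAt ℝ 2 (fun y => fderiv ℝ v y (e i)) x := by
    intro i x hx
    exact ContDiffAt.clm_apply (hWC x hx) contDiffAt_const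
  have hpd : ∀ (i : Fin n), ∀ x ∈ Ω, DifferentiableAt ℝ (fun y => fderiv ℝ v y (e i)) x :=
    fun i x hx => (hpC i x hx).differentiableAt (by norm_num)
  have hpfd : ∀ (i : Fin n), ∀ x ∈ Ω, ∀ z, fderiv ℝ (fun y => fderiv ℝ v y (e i)) x z
      = fderiv ℝ (fderiv ℝ v) x z (e i) := fun i x hx z =>
    fderiv_apply_basis ((hWC x hx).differentiableAt (by norm_num)) (e i) z
  have hsymm : ∀ x ∈ Ω, ∀ i k, fderiv ℝ (fun y => fderiv ℝ v y (e i)) x (e k)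
      = fderiv ℝ (fun y => fderiv ℝ v y (e k)) x (e i) := by
    intro x hx i k
    rw [hpfd i x hx, hpfd k x hx]
    exact ((hvC x hx).isSymmSndFDerivAt (by norm_num)) (e k) (e i)
  have hsd : ∀ x ∈ Ω, ∀ (i k : Fin n),
      DifferentiableAt ℝ (fun y => fderiv ℝ (fun z => fderiv ℝ v z (e i)) y (e k)) x := by
    intro x hx i k
    have h1 : ContDiffAt ℝ 1 (fderiv ℝ (fun z => fderiv ℝ v z (e i))) x :=
      (hpC i x hx).fderiv_right (m := 1) (by norm_num)
    exact (h1.differentiableAt one_ne_zero).clm_apply (differentiableAt_const _)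
  -- step (a)
  have hqa : ∀ x ∈ Ω, ∀ k, ∑ i, (fderiv ℝ v x (e i))
      * fderiv ℝ (fun y => fderiv ℝ v y (e i)) x (e k) = 0 := by
    intro x hx k
    have hder : HasFDerivAt (fun z => ∑ i, (fderiv ℝ v z (e i)) * (fderiv ℝ v z (e i)))
        (∑ i, ((fderiv ℝ v x (e i)) • fderiv ℝ (fun y => fderiv ℝ v y (e i)) x
             + (fderiv ℝ v x (e i)) • fderiv ℝ (fun y => fderiv ℝ v y (e i)) x)) x := by
      apply HasFDerivAt.fun_sum
      intro i _
      exact ((hpd i x hx).hasFDerivAt.mul (hpd i x hx).hasFDerivAt)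
    have hconst : (fun z => ∑ i, (fderiv ℝ v z (e i)) * (fderiv ℝ v z (e i)))
        =ᶠ[nhds x] (fun _ => (1:ℝ)) := by
      filter_upwards [hΩo.mem_nhds hx] with y hy
      have := hvsum y hy
      simpa [sq] using this
    have h1 : (∑ i, ((fderiv ℝ v x (e i)) • fderiv ℝ (fun y => fderiv ℝ v y (e i)) x
             + (fderiv ℝ v x (e i)) • fderiv ℝ (fun y => fderiv ℝ v y (e i)) x)) = 0 := by
      rw [← hder.fderiv, hconst.fderiv_eq, fderiv_fun_const]
      rfl
    have h2 := congrArg (fun (L : EuclideanSpace ℝ (Fin n) →L[ℝ] ℝ) => L (e k)) h1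
    simp only [ContinuousLinearMap.coe_sum', Finset.sum_apply, ContinuousLinearMap.add_apply,
      ContinuousLinearMap.coe_smul', Pi.smul_apply, smul_eq_mul,
      ContinuousLinearMap.zero_apply] at h2
    rw [Finset.sum_add_distrib] at h2
    linarith
  -- step (b)
  have hqb : ∀ x ∈ Ω, ∀ k, ∑ i, ((fderiv ℝ (fun y => fderiv ℝ v y (e i)) x (e k))^2
      + (fderiv ℝ v x (e i))
        * fderiv ℝ (fun y => fderiv ℝ (fun z => fderiv ℝ v z (e i)) y (e k)) x (e k)) = 0 := by
    intro x hx k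
    have hQder : HasFDerivAt
        (fun z => ∑ i, (fderiv ℝ v z (e i)) * fderiv ℝ (fun w => fderiv ℝ v w (e i)) z (e k))
        (∑ i, ((fderiv ℝ v x (e i))
              • fderiv ℝ (fun y => fderiv ℝ (fun z => fderiv ℝ v z (e i)) y (e k)) x
            + (fderiv ℝ (fun w => fderiv ℝ v w (e i)) x (e k))
              • fderiv ℝ (fun y => fderiv ℝ v y (e i)) x)) x := by
      apply HasFDerivAt.fun_sum; intro i _
      exact (hpd i x hx).hasFDerivAt.mul ((hsd x hx i k).hasFDerivAt)
    have hconst : (fun z => ∑ i, (fderiv ℝ v z (e i))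
        * fderiv ℝ (fun w => fderiv ℝ v w (e i)) z (e k)) =ᶠ[nhds x] (fun _ => (0:ℝ)) := by
      filter_upwards [hΩo.mem_nhds hx] with y hy
      exact hqa y hy k
    have h1 : (∑ i, ((fderiv ℝ v x (e i))
              • fderiv ℝ (fun y => fderiv ℝ (fun z => fderiv ℝ v z (e i)) y (e k)) x
            + (fderiv ℝ (fun w => fderiv ℝ v w (e i)) x (e k))
              • fderiv ℝ (fun y => fderiv ℝ v y (e i)) x)) = 0 := by
      rw [← hQder.fderiv, hconst.fderiv_eq, fderiv_fun_const]
      rfl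
    have h2 := congrArg (fun (L : EuclideanSpace ℝ (Fin n) →L[ℝ] ℝ) => L (e k)) h1
    simp only [ContinuousLinearMap.coe_sum', Finset.sum_apply, ContinuousLinearMap.add_apply,
      ContinuousLinearMap.coe_smul', Pi.smul_apply, smul_eq_mul,
      ContinuousLinearMap.zero_apply] at h2
    rw [← h2]
    refine Finset.sum_congr rfl fun i _ => by ring
  -- step (c)
  have hqc : ∀ x ∈ Ω, ∀ i, ∑ k,
      fderiv ℝ (fun y => fderiv ℝ (fun z => fderiv ℝ v z (e i)) y (e k)) x (e k) = 0 := by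
    intro x hx i
    have hstep : ∀ k, fderiv ℝ (fun y => fderiv ℝ (fun z => fderiv ℝ v z (e i)) y (e k)) x (e k)
        = fderiv ℝ (fun y => fderiv ℝ (fun z => fderiv ℝ v z (e k)) y (e k)) x (e i) := by
      intro k
      have hev : (fun y => fderiv ℝ (fun z => fderiv ℝ v z (e i)) y (e k))
          =ᶠ[nhds x] (fun y => fderiv ℝ (fun z => fderiv ℝ v z (e k)) y (e i)) := by
        filter_upwards [hΩo.mem_nhds hx] with y hy
        exact hsymm y hy i k
      rw [hev.fderiv_eq]
      have hwd : DifferentiableAt ℝ (fderiv ℝ (fun z => fderiv ℝ v z (e k))) x :=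
        ((hpC k x hx).fderiv_right (m := 1) (by norm_num)).differentiableAt one_ne_zero
      rw [fderiv_apply_basis hwd (e i) (e k), fderiv_apply_basis hwd (e k) (e i)]
      exact ((hpC k x hx).isSymmSndFDerivAt (by norm_num)) (e k) (e i)
    simp only [hstep]
    have hsum : HasFDerivAt (fun y => ∑ k, fderiv ℝ (fun z => fderiv ℝ v z (e k)) y (e k))
        (∑ k, fderiv ℝ (fun y => fderiv ℝ (fun z => fderiv ℝ v z (e k)) y (e k)) x) x := by
      apply HasFDerivAt.fun_sum; intro k _
      exact (hsd x hx k k).hasFDerivAt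
    have hconst : (fun y => ∑ k, fderiv ℝ (fun z => fderiv ℝ v z (e k)) y (e k))
        =ᶠ[nhds x] (fun _ => (0:ℝ)) := by
      filter_upwards [hΩo.mem_nhds hx] with y hy
      exact hlap y hy
    calc ∑ k, fderiv ℝ (fun y => fderiv ℝ (fun z => fderiv ℝ v z (e k)) y (e k)) x (e i)
        = (∑ k, fderiv ℝ (fun y => fderiv ℝ (fun z => fderiv ℝ v z (e k)) y (e k)) x) (e i) := by
          rw [ContinuousLinearMap.coe_sum', Finset.sum_apply]
      _ = fderiv ℝ (fun y => ∑ k, fderiv ℝ (fun z => fderiv ℝ v z (e k)) y (e k)) x (e i) := by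
          rw [hsum.fderiv]
      _ = 0 := by rw [hconst.fderiv_eq, fderiv_fun_const]; rfl
  -- Hessian of v vanishes
  have hHzero : ∀ x ∈ Ω, ∀ i k, fderiv ℝ (fun y => fderiv ℝ v y (e i)) x (e k) = 0 := by
    intro x hx i k
    have hb : ∑ k, ∑ i, ((fderiv ℝ (fun y => fderiv ℝ v y (e i)) x (e k))^2) = 0 := by
      have h1 : ∑ k, ∑ i, ((fderiv ℝ (fun y => fderiv ℝ v y (e i)) x (e k))^2
          + (fderiv ℝ v x (e i))
            * fderiv ℝ (fun y => fderiv ℝ (fun z => fderiv ℝ v z (e i)) y (e k)) x (e k)) = 0 :=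
        Finset.sum_eq_zero fun k _ => hqb x hx k
      have h2 : ∑ k, ∑ i, (fderiv ℝ v x (e i))
            * fderiv ℝ (fun y => fderiv ℝ (fun z => fderiv ℝ v z (e i)) y (e k)) x (e k) = 0 := by
        rw [Finset.sum_comm]
        refine Finset.sum_eq_zero fun i _ => ?_
        rw [← Finset.mul_sum, hqc x hx i, mul_zero]
      simp only [Finset.sum_add_distrib] at h1
      rw [h2] at h1
      linarith
    have hnn : ∀ k ∈ Finset.univ, (0:ℝ) ≤ ∑ i, ((fderiv ℝ (fun y => fderiv ℝ v y (e i)) x (e k))^2) :=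
      fun k _ => Finset.sum_nonneg fun i _ => sq_nonneg _
    have h3 := (Finset.sum_eq_zero_iff_of_nonneg hnn).1 hb k (Finset.mem_univ k)
    have h4 := (Finset.sum_eq_zero_iff_of_nonneg (fun i _ => sq_nonneg _)).1 h3 i (Finset.mem_univ i)
    exact pow_eq_zero_iff (by norm_num) |>.1 h4
  have hW0 : ∀ x ∈ Ω, fderiv ℝ (fderiv ℝ v) x = 0 := by
    intro x hx
    apply clm2_eq_zero_of_basis
    intro k
    apply clm_eq_zero_of_basis
    intro i
    have h1 := hHzero x hx i k
    rw [hpfd i x hx (e k)] at h1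
    exact h1
  have hWconst := const_of_fderiv_zero hΩo hΩc.isPreconnected (fderiv ℝ v)
    (fun x hx => (hWC x hx).differentiableAt (by norm_num)) hW0
  obtain ⟨x₀, hx₀⟩ := hΩc.nonempty
  have hvd : ∀ x ∈ Ω, DifferentiableAt ℝ v x := fun x hx =>
    (hvC x hx).differentiableAt (by norm_num)
  set L₀ := fderiv ℝ v x₀ with hL₀def
  have hφd : ∀ x ∈ Ω, DifferentiableAt ℝ (fun y => v y - L₀ y) x := fun x hx =>
    (hvd x hx).sub (L₀.differentiable.differentiableAt)
  have hφ0 : ∀ x ∈ Ω, fderiv ℝ (fun y => v y - L₀ y) x = 0 := by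
    intro x hx
    rw [fderiv_fun_sub (hvd x hx) (L₀.differentiable.differentiableAt), L₀.fderiv,
      hWconst x hx x₀ hx₀]
    exact sub_self _
  have hφconst := const_of_fderiv_zero hΩo hΩc.isPreconnected (fun y => v y - L₀ y) hφd hφ0
  have ha : ‖gradient v x₀‖ = 1 := hnormv x₀ hx₀
  have hinner : ∀ y, ⟪gradient v x₀, y⟫ = L₀ y := fun y => inner_gradient_eq v x₀ y
  have hva : ∀ x ∈ Ω, v x = ⟪gradient v x₀, x⟫ + (v x₀ - L₀ x₀) := by
    intro x hx
    have h5 := hφconst x hx x₀ hx₀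
    rw [hinner]
    linarith
  have hGmono : StrictMonoOn G U := by
    rw [hG]; exact G_strictMonoOn hF.continuous hUord hu₀U hUS
  refine ⟨gradient v x₀, v x₀ - L₀ x₀, Function.invFunOn G U, ha, ?_⟩
  intro x hx
  have h1 : G (u x) = ⟪gradient v x₀, x⟫ + (v x₀ - L₀ x₀) := hva x hx
  rw [← h1]
  exact (hGmono.injOn.leftInvOn_invFunOn (huU x hx)).symm
end

section
/- Let Ω ⊂ ℝⁿ be a nonempty connected open set, let F ∈ C²(ℝ) with F ≤ 0, let u₀ ∈ ℝ satisfy F(u₀) = 0, and let u ∈ C¹(Ω) satisfy ‖∇u(x)‖² ≤ −2F(u(x)) for all x ∈ Ω. If u(x₀) = u₀ for some x₀ ∈ Ω, then u is identically equal to u₀ on Ω. -/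
open scoped RealInnerProductSpace
open Metric Set Filter

lemma neg_F_bound (F : ℝ → ℝ) (hF : ContDiff ℝ 2 F) (hFneg : ∀ t, F t ≤ 0)
    (u₀ : ℝ) (hFu₀ : F u₀ = 0) :
    ∃ K > (0:ℝ), ∃ d > (0:ℝ), ∀ t, |t - u₀| ≤ d → -F t ≤ K * (t - u₀)^2 := by
  have hFd : Differentiable ℝ F := hF.differentiable (by norm_num)
  have hmax : deriv F u₀ = 0 := by
    have hloc : IsLocalMax F u₀ :=
      Eventually.of_forall fun t => (hFneg t).trans_eq hFu₀.symm
    exact hloc.deriv_eq_zero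
  have hF' : ContDiffAt ℝ 1 (deriv F) u₀ :=
    ((contDiff_succ_iff_deriv.mp (show ContDiff ℝ (1+1) F from by norm_num [hF])).2.2).contDiffAt
  obtain ⟨K, s, hs, hlip⟩ := hF'.exists_lipschitzOnWith
  obtain ⟨d, hd0, hball⟩ := Metric.nhds_basis_closedBall.mem_iff.mp hs
  refine ⟨K + 1, by positivity, d, hd0, fun t ht => ?_⟩
  have hsub : closedBall u₀ |t - u₀| ⊆ s :=
    (closedBall_subset_closedBall ht).trans hball
  have hts : t ∈ closedBall u₀ |t - u₀| := by
    simp [Real.dist_eq]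
  have hu₀s : u₀ ∈ closedBall u₀ |t - u₀| := mem_closedBall_self (abs_nonneg _)
  have bound : ∀ x ∈ closedBall u₀ |t - u₀|, ‖deriv F x‖ ≤ (K + 1) * |t - u₀| := by
    intro x hx
    have h1 : dist (deriv F x) (deriv F u₀) ≤ K * dist x u₀ :=
      hlip.dist_le_mul x (hsub hx) u₀ (hsub hu₀s)
    rw [hmax, dist_zero_right, Real.dist_eq] at h1
    calc ‖deriv F x‖ ≤ K * |x - u₀| := h1
      _ ≤ (K + 1) * |t - u₀| := by
          have hx' : |x - u₀| ≤ |t - u₀| := by simpa [Real.dist_eq] using hx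
          nlinarith [abs_nonneg (x - u₀), abs_nonneg (t - u₀), K.coe_nonneg]
  have hmvt : ‖F t - F u₀‖ ≤ (K + 1) * |t - u₀| * ‖t - u₀‖ :=
    (convex_closedBall _ _).norm_image_sub_le_of_norm_deriv_le (fun x _ => hFd x) bound
      hu₀s hts
  have h2 : -F t ≤ (K + 1) * |t - u₀| * |t - u₀| := by
    rw [hFu₀, sub_zero, Real.norm_eq_abs, abs_of_nonpos (hFneg t)] at hmvt
    simpa [Real.norm_eq_abs] using hmvt
  calc -F t ≤ (K + 1) * |t - u₀| * |t - u₀| := h2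
    _ = (K + 1) * (t - u₀)^2 := by rw [mul_assoc, ← abs_mul, ← sq, abs_of_nonneg (sq_nonneg _)]

/-- Gronwall-type rigidity: if `F ∈ C²`, `F ≤ 0`, `F(u₀) = 0`, and `u ∈ C¹(Ω)` on a
nonempty connected open set `Ω` satisfies `‖∇u‖² ≤ −2F(u)` in `Ω` and `u(x₀) = u₀`
at some point, then `u ≡ u₀` on `Ω`. -/
theorem constant_from_gradient_bound
    {n : ℕ} (Ω : Set (EuclideanSpace ℝ (Fin n)))
    (hΩo : IsOpen Ω) (hΩc : IsConnected Ω)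
    (F : ℝ → ℝ) (hF : ContDiff ℝ 2 F) (hFneg : ∀ t, F t ≤ 0)
    (u₀ : ℝ) (hFu₀ : F u₀ = 0)
    (u : EuclideanSpace ℝ (Fin n) → ℝ) (hu : ContDiffOn ℝ 1 u Ω)
    (hgrad : ∀ x ∈ Ω, ‖gradient u x‖ ^ 2 ≤ -(2 * F (u x)))
    (x₀ : EuclideanSpace ℝ (Fin n)) (hx₀ : x₀ ∈ Ω) (hux₀ : u x₀ = u₀) :
    ∀ x ∈ Ω, u x = u₀ := by
  obtain ⟨K, hK, d, hd, hbd⟩ := neg_F_bound F hF hFneg u₀ hFu₀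
  have hdiff : ∀ x ∈ Ω, DifferentiableAt ℝ u x := fun x hx =>
    (hu.contDiffAt (hΩo.mem_nhds hx)).differentiableAt one_ne_zero
  have hgb : ∀ z ∈ Ω, |u z - u₀| ≤ d → ‖gradient u z‖ ≤ Real.sqrt (2*K) * |u z - u₀| := by
    intro z hz hzd
    have h1 : ‖gradient u z‖ ^ 2 ≤ 2*K * (u z - u₀)^2 := by
      have h2 := hgrad z hz
      have h3 := hbd (u z) hzd
      nlinarith
    calc ‖gradient u z‖ = Real.sqrt (‖gradient u z‖^2) := (Real.sqrt_sq (norm_nonneg _)).symm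
      _ ≤ Real.sqrt (2*K*(u z - u₀)^2) := Real.sqrt_le_sqrt h1
      _ = Real.sqrt (2*K) * |u z - u₀| := by
          rw [Real.sqrt_mul (by positivity), Real.sqrt_sq_eq_abs]
  -- key local claim
  have key : ∀ p ∈ Ω, u p = u₀ → ∃ ε > (0:ℝ), ball p ε ⊆ Ω ∧ ∀ y ∈ ball p ε, u y = u₀ := by
    intro p hp hup
    obtain ⟨r₁, hr₁, hball₁⟩ := Metric.isOpen_iff.mp hΩo p hp
    have hcont : ContinuousAt u p := hu.continuousOn.continuousAt (hΩo.mem_nhds hp)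
    obtain ⟨r₂, hr₂, h₂⟩ := Metric.eventually_nhds_iff_ball.mp
      (Metric.tendsto_nhds.mp hcont d hd)
    refine ⟨min r₁ r₂, lt_min hr₁ hr₂,
      (ball_subset_ball (min_le_left _ _)).trans hball₁, ?_⟩
    intro y hy
    set γ : ℝ → EuclideanSpace ℝ (Fin n) := fun t => p + t • (y - p) with hγ
    have hγmem : ∀ t ∈ Icc (0:ℝ) 1, γ t ∈ ball p (min r₁ r₂) := by
      intro t ht
      have h1 : dist (γ t) p = |t| * ‖y - p‖ := by
        simp [hγ, dist_eq_norm, norm_smul, Real.norm_eq_abs]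
      rw [mem_ball, h1]
      have h2 : ‖y - p‖ < min r₁ r₂ := by rwa [mem_ball, dist_eq_norm] at hy
      have h3 : |t| ≤ 1 := abs_le.mpr ⟨by linarith [ht.1], ht.2⟩
      nlinarith [norm_nonneg (y - p)]
    have hγΩ : ∀ t ∈ Icc (0:ℝ) 1, γ t ∈ Ω := fun t ht =>
      hball₁ (ball_subset_ball (min_le_left _ _) (hγmem t ht))
    have hγd : ∀ t ∈ Icc (0:ℝ) 1, |u (γ t) - u₀| ≤ d := by
      intro t ht
      have := h₂ _ (ball_subset_ball (min_le_right _ _) (hγmem t ht))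
      rw [Real.dist_eq, hup] at this
      exact this.le
    have hγderiv : ∀ t : ℝ, HasDerivAt γ (y - p) t := fun t => by
      have h := ((hasDerivAt_id t).smul_const (y - p)).const_add p
      rw [one_smul] at h
      exact h
    have hfderiv : ∀ t ∈ Icc (0:ℝ) 1,
        HasDerivAt (fun t => u (γ t) - u₀) (fderiv ℝ u (γ t) (y - p)) t := fun t ht =>
      ((hdiff _ (hγΩ t ht)).hasFDerivAt.comp_hasDerivAt t (hγderiv t)).sub_const u₀
    have hcontf : ContinuousOn (fun t => u (γ t) - u₀) (Icc (0:ℝ) 1) := fun t ht =>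
      (hfderiv t ht).continuousAt.continuousWithinAt
    set C := Real.sqrt (2*K) * ‖y - p‖ with hC
    have bound : ∀ t ∈ Ico (0:ℝ) 1,
        ‖fderiv ℝ u (γ t) (y - p)‖ ≤ C * ‖u (γ t) - u₀‖ + 0 := by
      intro t ht
      have htI : t ∈ Icc (0:ℝ) 1 := Ico_subset_Icc_self ht
      have h1 : ‖fderiv ℝ u (γ t) (y - p)‖ ≤ ‖fderiv ℝ u (γ t)‖ * ‖y - p‖ :=
        (fderiv ℝ u (γ t)).le_opNorm _
      have h2 : ‖fderiv ℝ u (γ t)‖ = ‖gradient u (γ t)‖ := by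
        rw [gradient]; exact (LinearIsometryEquiv.norm_map _ _).symm
      have h3 := hgb (γ t) (hγΩ t htI) (hγd t htI)
      rw [h2] at h1
      have h4 : ‖u (γ t) - u₀‖ = |u (γ t) - u₀| := rfl
      rw [add_zero, hC, h4]
      calc ‖fderiv ℝ u (γ t) (y - p)‖ ≤ ‖gradient u (γ t)‖ * ‖y - p‖ := h1
        _ ≤ (Real.sqrt (2*K) * |u (γ t) - u₀|) * ‖y - p‖ := by
            exact mul_le_mul_of_nonneg_right h3 (norm_nonneg _)
        _ = Real.sqrt (2*K) * ‖y - p‖ * |u (γ t) - u₀| := by ring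
    have hf0 : ‖u (γ 0) - u₀‖ ≤ 0 := by simp [hγ, hup]
    have hgron := norm_le_gronwallBound_of_norm_deriv_right_le hcontf
      (fun t ht => (hfderiv t (Ico_subset_Icc_self ht)).hasDerivWithinAt) hf0 bound
      1 (right_mem_Icc.mpr zero_le_one)
    rw [gronwallBound_ε0_δ0] at hgron
    have hγ1 : γ 1 = y := by simp [hγ]
    rw [hγ1] at hgron
    have : ‖u y - u₀‖ = 0 := le_antisymm hgron (norm_nonneg _)
    have := norm_eq_zero.mp this
    linarith [sub_eq_zero.mp this]
  -- connectedness argument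
  intro x hx
  by_contra hne
  have hSopen : IsOpen {z | z ∈ Ω ∧ u z = u₀} := by
    rw [Metric.isOpen_iff]
    rintro p ⟨hp, hup⟩
    obtain ⟨ε, hε, hsub, hval⟩ := key p hp hup
    exact ⟨ε, hε, fun y hy => ⟨hsub hy, hval y hy⟩⟩
  have hTopen : IsOpen {z | z ∈ Ω ∧ u z ≠ u₀} := by
    have h := hu.continuousOn.isOpen_inter_preimage hΩo (isOpen_compl_singleton : IsOpen {u₀}ᶜ)
    exact h
  have hcover : Ω ⊆ {z | z ∈ Ω ∧ u z = u₀} ∪ {z | z ∈ Ω ∧ u z ≠ u₀} := by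
    intro z hz
    by_cases h : u z = u₀
    · exact Or.inl ⟨hz, h⟩
    · exact Or.inr ⟨hz, h⟩
  obtain ⟨z, _, ⟨_, h1⟩, ⟨_, h2⟩⟩ := hΩc.isPreconnected _ _ hSopen hTopen hcover
    ⟨x₀, hx₀, hx₀, hux₀⟩ ⟨x, hx, hx, hne⟩
  exact h2 h1
end

section
/- Let D ⊂ ℝⁿ be an open set, let w : D → ℝ be a bounded C¹ function with finite supremum ξ = sup_D w, let r > 0, and let (y_k) be a sequence in D with w(y_k) → ξ and B_r(y_k) ⊂ D for all k. Then there exists a sequence (z_k) in D such that w(z_k) → ξ, ‖y_k − z_k‖ → 0, and ∇w(z_k) → 0 as k → ∞. -/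
open scoped RealInnerProductSpace
open Metric Set Filter

lemma ekeland_aux {n : ℕ} (D : Set (EuclideanSpace ℝ (Fin n))) (hD : IsOpen D)
    (w : EuclideanSpace ℝ (Fin n) → ℝ) (hw : ContDiffOn ℝ 1 w D)
    (ξ : ℝ) (hξ : IsLUB (w '' D) ξ)
    (ρ : ℝ) (hρ : 0 < ρ) (y₀ : EuclideanSpace ℝ (Fin n))
    (hb : closedBall y₀ ρ ⊆ D)
    (c : ℝ) (hc : 0 < c) (hkey : ξ - w y₀ ≤ c * (ρ / 2) ^ 2) :
    ∃ z, z ∈ D ∧ w y₀ ≤ w z ∧ w z ≤ ξ ∧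
      c * ‖z - y₀‖ ^ 2 ≤ ξ - w y₀ ∧
      gradient w z = (2 * c) • (z - y₀) := by
  set K := closedBall y₀ ρ with hK
  have hKD : K ⊆ D := hb
  set φ : EuclideanSpace ℝ (Fin n) → ℝ := fun x => w x - c * ‖x - y₀‖ ^ 2 with hφ
  have hφc : ContinuousOn φ K := by
    apply ContinuousOn.sub ((hw.continuousOn).mono hKD)
    exact (continuous_const.mul ((continuous_id.sub continuous_const).norm.pow 2)).continuousOn
  obtain ⟨z, hzK, hmax⟩ := (isCompact_closedBall y₀ ρ).exists_isMaxOn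
    ⟨y₀, mem_closedBall_self hρ.le⟩ hφc
  have hzD : z ∈ D := hKD hzK
  have hwzle : w z ≤ ξ := hξ.1 ⟨z, hzD, rfl⟩
  have hφy : φ y₀ ≤ φ z := hmax (mem_closedBall_self hρ.le)
  have hφy' : w y₀ ≤ w z - c * ‖z - y₀‖ ^ 2 := by
    simp only [hφ, sub_self, norm_zero] at hφy
    simpa using hφy
  have hnn : (0:ℝ) ≤ c * ‖z - y₀‖ ^ 2 := by positivity
  have hle : c * ‖z - y₀‖ ^ 2 ≤ ξ - w y₀ := by linarith
  -- z is in the open ball of radius ρ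
  have hznorm : ‖z - y₀‖ ≤ ρ / 2 := by
    have h1 : ‖z - y₀‖ ^ 2 ≤ (ρ / 2) ^ 2 := by
      nlinarith
    have := Real.sqrt_le_sqrt h1
    rwa [Real.sqrt_sq (norm_nonneg _), Real.sqrt_sq (by positivity)] at this
  have hzball : z ∈ ball y₀ ρ := by
    rw [mem_ball_iff_norm]
    linarith
  have hKnhds : K ∈ nhds z :=
    Filter.mem_of_superset (isOpen_ball.mem_nhds hzball) ball_subset_closedBall
  have hlocal : IsLocalMax φ z := hmax.isLocalMax hKnhds
  -- derivatives
  have hwdiff : HasFDerivAt w (fderiv ℝ w z) z :=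
    (((hw.contDiffAt (hD.mem_nhds hzD)).differentiableAt one_ne_zero)).hasFDerivAt
  have hq : HasFDerivAt (fun x : EuclideanSpace ℝ (Fin n) => ‖x - y₀‖ ^ 2)
      (2 • (innerSL ℝ (z - y₀)).comp (ContinuousLinearMap.id ℝ _)) z :=
    ((hasFDerivAt_id z).sub_const y₀).norm_sq
  have hφdiff : HasFDerivAt φ
      (fderiv ℝ w z - c • (2 • (innerSL ℝ (z - y₀)).comp (ContinuousLinearMap.id ℝ _))) z :=
    hwdiff.sub ((hq.const_mul c).congr_fderiv (by ext v; simp [smul_smul]))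
  have hzero := hlocal.hasFDerivAt_eq_zero hφdiff
  have hfd : fderiv ℝ w z =
      c • (2 • (innerSL ℝ (z - y₀)).comp (ContinuousLinearMap.id ℝ _)) := by
    have := sub_eq_zero.mp hzero
    exact this
  have hgrad : HasGradientAt w ((2 * c) • (z - y₀)) z := by
    rw [hasGradientAt_iff_hasFDerivAt]
    refine hwdiff.congr_fderiv ?_
    rw [hfd]
    ext v
    simp [inner_smul_left, real_inner_comm]
    ring
  exact ⟨z, hzD, by linarith, hwzle, hle, hgrad.gradient⟩

/-- An application of the Ekeland variational principle: if `w` is a bounded `C¹`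
function on an open set `D ⊆ ℝⁿ` with supremum `ξ`, and `(y_k) ⊆ D` is a maximizing
sequence with `B_r(y_k) ⊆ D` for a fixed `r > 0`, then there is a sequence `(z_k) ⊆ D`
with `w(z_k) → ξ`, `‖y_k − z_k‖ → 0` and `∇w(z_k) → 0`. -/
theorem ekeland_almost_critical_sequence
    {n : ℕ} (D : Set (EuclideanSpace ℝ (Fin n))) (hD : IsOpen D)
    (w : EuclideanSpace ℝ (Fin n) → ℝ) (hw : ContDiffOn ℝ 1 w D)
    (hbdd : BddAbove (w '' D)) (hbdd' : BddBelow (w '' D))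
    (ξ : ℝ) (hξ : IsLUB (w '' D) ξ)
    (r : ℝ) (hr : 0 < r)
    (y : ℕ → EuclideanSpace ℝ (Fin n))
    (hyD : ∀ k, y k ∈ D)
    (hyb : ∀ k, ball (y k) r ⊆ D)
    (hwy : Tendsto (fun k => w (y k)) atTop (nhds ξ)) :
    ∃ z : ℕ → EuclideanSpace ℝ (Fin n),
      (∀ k, z k ∈ D) ∧
      Tendsto (fun k => w (z k)) atTop (nhds ξ) ∧
      Tendsto (fun k => ‖y k - z k‖) atTop (nhds 0) ∧
      Tendsto (fun k => gradient w (z k)) atTop (nhds 0) := by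
  obtain ⟨ρ, hρdef⟩ : ∃ ρ : ℝ, ρ = r / 2 := ⟨_, rfl⟩
  have hρ : 0 < ρ := by rw [hρdef]; positivity
  obtain ⟨ε, hεdef⟩ : ∃ ε : ℕ → ℝ, ε = fun k => ξ - w (y k) := ⟨_, rfl⟩
  have hεnn : ∀ k, 0 ≤ ε k := fun k => by
    have : w (y k) ≤ ξ := hξ.1 ⟨y k, hyD k, rfl⟩
    rw [hεdef]; simp only; linarith
  obtain ⟨m, hmdef⟩ : ∃ m : ℕ → ℝ,
      m = fun k => Real.sqrt (ε k) + ε k + ((k : ℝ) + 1)⁻¹ := ⟨_, rfl⟩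
  have hmpos : ∀ k, 0 < m k := fun k => by
    have h1 := Real.sqrt_nonneg (ε k)
    have h2 := hεnn k
    have h3 : (0:ℝ) < ((k : ℝ) + 1)⁻¹ := by positivity
    rw [hmdef]; simp only; linarith
  have hsm : ∀ k, Real.sqrt (ε k) ≤ m k := fun k => by
    have h2 := hεnn k
    have h3 : (0:ℝ) < ((k : ℝ) + 1)⁻¹ := by positivity
    rw [hmdef]; simp only; linarith
  obtain ⟨c, hcdef⟩ : ∃ c : ℕ → ℝ, c = fun k => 4 / ρ ^ 2 * m k := ⟨_, rfl⟩
  have hcpos : ∀ k, 0 < c k := fun k => by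
    have := hmpos k; rw [hcdef]; simp only; positivity
  have hceq : ∀ k, c k * (ρ / 2) ^ 2 = m k := fun k => by
    rw [hcdef]; simp only; field_simp; ring
  have hεm : ∀ k, ε k ≤ m k := fun k => by
    have h1 := Real.sqrt_nonneg (ε k)
    have h3 : (0:ℝ) < ((k : ℝ) + 1)⁻¹ := by positivity
    rw [hmdef]; simp only; linarith
  have H : ∀ k, ∃ z, z ∈ D ∧ w (y k) ≤ w z ∧ w z ≤ ξ ∧
      c k * ‖z - y k‖ ^ 2 ≤ ε k ∧
      gradient w z = (2 * c k) • (z - y k) := by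
    intro k
    have haux := ekeland_aux D hD w hw ξ hξ ρ hρ (y k)
      ((closedBall_subset_ball (by rw [hρdef]; linarith)).trans (hyb k))
      (c k) (hcpos k) (by rw [hceq k, hεdef] at *; exact hεm k)
    obtain ⟨z, h1, h2, h3, h4, h5⟩ := haux
    exact ⟨z, h1, h2, h3, by rw [hεdef]; exact h4, h5⟩
  choose z hzD hz1 hz2 hz3 hz4 using H
  have hε0 : Tendsto ε atTop (nhds 0) := by
    rw [hεdef]
    have := hwy.const_sub ξ
    simpa using this
  have hsqrtε : Tendsto (fun k => Real.sqrt (ε k)) atTop (nhds 0) := by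
    have := (Real.continuous_sqrt.tendsto 0).comp hε0
    simpa [Function.comp_def] using this
  have hm0 : Tendsto m atTop (nhds 0) := by
    rw [hmdef]
    have hinv : Tendsto (fun k : ℕ => ((k : ℝ) + 1)⁻¹) atTop (nhds 0) := by
      simpa [one_div] using tendsto_one_div_add_atTop_nhds_zero_nat (𝕜 := ℝ)
    have := (hsqrtε.add hε0).add hinv
    simpa using this
  refine ⟨z, hzD, ?_, ?_, ?_⟩
  · exact tendsto_of_tendsto_of_tendsto_of_le_of_le hwy tendsto_const_nhds hz1 hz2
  · -- ‖y k - z k‖ → 0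
    have hub : ∀ k, ‖z k - y k‖ ^ 2 ≤ (ρ / 2) ^ 2 * Real.sqrt (ε k) := by
      intro k
      have h3 := hz3 k
      have hc := hcpos k
      have hsq : Real.sqrt (ε k) * Real.sqrt (ε k) = ε k := Real.mul_self_sqrt (hεnn k)
      have hεle : ε k ≤ m k * Real.sqrt (ε k) := by
        nlinarith [mul_le_mul_of_nonneg_right (hsm k) (Real.sqrt_nonneg (ε k)), hsq]
      have h5 : c k * ‖z k - y k‖ ^ 2 ≤ c k * ((ρ / 2) ^ 2 * Real.sqrt (ε k)) := by
        refine h3.trans (hεle.trans ?_)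
        rw [← hceq k]
        ring_nf
        exact le_of_eq (by ring)
      exact le_of_mul_le_mul_left h5 hc
    have hsq0 : Tendsto (fun k => ‖z k - y k‖ ^ 2) atTop (nhds 0) := by
      have hub0 : Tendsto (fun k => (ρ / 2) ^ 2 * Real.sqrt (ε k)) atTop (nhds 0) := by
        simpa using hsqrtε.const_mul ((ρ / 2) ^ 2)
      exact tendsto_of_tendsto_of_tendsto_of_le_of_le tendsto_const_nhds hub0
        (fun k => by positivity) hub
    have := (Real.continuous_sqrt.tendsto 0).comp hsq0
    simp only [Function.comp_def, Real.sqrt_zero] at this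
    refine this.congr fun k => ?_
    rw [Real.sqrt_sq (norm_nonneg _), norm_sub_rev]
  · -- gradient → 0
    rw [tendsto_zero_iff_norm_tendsto_zero]
    have hub : ∀ k, ‖gradient w (z k)‖ ≤ 2 * Real.sqrt (c k * ε k) := by
      intro k
      rw [hz4 k, norm_smul]
      have hc := hcpos k
      have h3 := hz3 k
      have h1 : c k * ‖z k - y k‖ ≤ Real.sqrt (c k * ε k) := by
        rw [show c k * ‖z k - y k‖ = Real.sqrt ((c k * ‖z k - y k‖) ^ 2) from
          (Real.sqrt_sq (by positivity)).symm]
        apply Real.sqrt_le_sqrt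
        nlinarith [mul_le_mul_of_nonneg_left h3 hc.le]
      have h2 : ‖(2 : ℝ) * c k‖ = 2 * c k := by
        rw [Real.norm_eq_abs, abs_of_pos (by linarith)]
      rw [h2]
      nlinarith [norm_nonneg (z k - y k), Real.sqrt_nonneg (c k * ε k), h1, hc]
    have hcε : Tendsto (fun k => c k * ε k) atTop (nhds 0) := by
      rw [hcdef]
      have := (hm0.const_mul (4 / ρ ^ 2)).mul hε0
      simpa using this
    have hsub : Tendsto (fun k => 2 * Real.sqrt (c k * ε k)) atTop (nhds 0) := by
      have := ((Real.continuous_sqrt.tendsto 0).comp hcε).const_mul 2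
      simpa [Function.comp_def] using this
    exact tendsto_of_tendsto_of_tendsto_of_le_of_le tendsto_const_nhds hsub
      (fun k => norm_nonneg _) hub
end
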